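/- arXiv:2010.05628 — 5 statements merged into one kernel-verified Lean document; each statement's English description precedes it below -/
import Mathlib

section
/- Let μ > 0, C₁ > 0 and g : ℝ → ℝ be C¹ with |g'(r)| ≤ C₁ r for 0 ≤ r ≤ r₀. Fix r̄ with 0 < 2r̄ ≤ r₀ and 2C₁ r̄/μ < 1. Then the map K(ρ)(τ) = r̄ e^{-μτ} + e^{-μτ} ∫₀^τ e^{μt} g(ρ(t)) dt is a contraction on the set R = {ρ : [0,∞) → ℝ continuous : 0 ≤ ρ(τ) ≤ 2r̄ e^{-μτ}} with respect to the metric d(ρ₁,ρ₂) = sup_{τ≥0} e^{μτ}|ρ₁(τ)−ρ₂(τ)|, with contraction constant 2C₁r̄/μ. -/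
open intervalIntegral in
lemma stmt_5_exp_int (μ τ : ℝ) (hμ : 0 < μ) :
    ∫ t in (0:ℝ)..τ, Real.exp (-μ*t) = (1 - Real.exp (-μ*τ))/μ := by
  rw [intervalIntegral.integral_comp_mul_left Real.exp (neg_ne_zero.2 hμ.ne'), integral_exp]
  rw [smul_eq_mul, eq_div_iff hμ.ne']
  ring_nf
  simp [mul_inv_cancel₀ hμ.ne']
  ring

/-- The Duhamel map is a contraction with constant `2C₁rb/μ` for the weighted
sup distance `d(ρ₁,ρ₂) = sup_τ e^{μτ}|ρ₁(τ)-ρ₂(τ)|`. -/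
theorem stmt_5 (μ C₁ r₀ rb : ℝ) (hμ : 0 < μ) (hC₁ : 0 < C₁) (hr₀ : 0 < r₀)
    (g : ℝ → ℝ) (hg : ContDiff ℝ 1 g)
    (hg' : ∀ r, 0 ≤ r → r ≤ r₀ → |deriv g r| ≤ C₁ * r)
    (hrb0 : 0 < rb) (hrb1 : 2 * rb ≤ r₀) (hrb2 : 2 * C₁ * rb / μ < 1)
    (ρ₁ ρ₂ : ℝ → ℝ) (hρ₁c : Continuous ρ₁) (hρ₂c : Continuous ρ₂)
    (hρ₁ : ∀ τ, 0 ≤ τ → 0 ≤ ρ₁ τ ∧ ρ₁ τ ≤ 2 * rb * Real.exp (-μ * τ))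
    (hρ₂ : ∀ τ, 0 ≤ τ → 0 ≤ ρ₂ τ ∧ ρ₂ τ ≤ 2 * rb * Real.exp (-μ * τ))
    (d : ℝ) (hd : ∀ t, 0 ≤ t → |ρ₁ t - ρ₂ t| ≤ d * Real.exp (-μ * t)) :
    ∀ τ, 0 ≤ τ →
      |(rb * Real.exp (-μ * τ) +
          Real.exp (-μ * τ) * ∫ t in (0:ℝ)..τ, Real.exp (μ * t) * g (ρ₁ t)) -
       (rb * Real.exp (-μ * τ) +
          Real.exp (-μ * τ) * ∫ t in (0:ℝ)..τ, Real.exp (μ * t) * g (ρ₂ t))|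
        ≤ (2 * C₁ * rb / μ) * d * Real.exp (-μ * τ) := by
  intro τ hτ
  have hgc : Continuous g := hg.continuous
  have hgd : Differentiable ℝ g := hg.differentiable one_ne_zero
  have hd0 : 0 ≤ d := by
    have h := hd 0 le_rfl
    simp at h
    exact le_trans (abs_nonneg _) h
  -- pointwise bound on the integrand difference
  have key : ∀ t ∈ Set.Icc (0:ℝ) τ,
      |Real.exp (μ*t) * g (ρ₁ t) - Real.exp (μ*t) * g (ρ₂ t)|
        ≤ 2*C₁*rb*d*Real.exp (-μ*t) := by
    intro t ht
    obtain ⟨h1a, h1b⟩ := hρ₁ t ht.1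
    obtain ⟨h2a, h2b⟩ := hρ₂ t ht.1
    have hexp1 : Real.exp (-μ*t) ≤ 1 := by
      apply Real.exp_le_one_iff.2
      nlinarith [ht.1, hμ.le]
    have hM : ∀ x ∈ Set.Icc (0:ℝ) (2*rb*Real.exp (-μ*t)),
        ‖deriv g x‖ ≤ C₁*(2*rb*Real.exp (-μ*t)) := by
      intro x hx
      have hxr0 : x ≤ r₀ := le_trans hx.2 (by nlinarith)
      calc ‖deriv g x‖ ≤ C₁ * x := hg' x hx.1 hxr0
        _ ≤ C₁*(2*rb*Real.exp (-μ*t)) := by nlinarith [hx.2]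
    have hmvt := (convex_Icc (0:ℝ) (2*rb*Real.exp (-μ*t))).norm_image_sub_le_of_norm_deriv_le
      (fun x _ => hgd x) hM ⟨h2a, h2b⟩ ⟨h1a, h1b⟩
    rw [Real.norm_eq_abs, Real.norm_eq_abs] at hmvt
    have hρd : |ρ₁ t - ρ₂ t| ≤ d * Real.exp (-μ*t) := hd t ht.1
    have hee : Real.exp (μ*t) * Real.exp (-μ*t) = 1 := by
      rw [← Real.exp_add]; ring_nf; exact Real.exp_zero
    have hepos : (0:ℝ) < Real.exp (μ*t) := Real.exp_pos _
    have : |Real.exp (μ*t) * g (ρ₁ t) - Real.exp (μ*t) * g (ρ₂ t)|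
        = Real.exp (μ*t) * |g (ρ₁ t) - g (ρ₂ t)| := by
      rw [← mul_sub, abs_mul, abs_of_pos hepos]
    rw [this]
    have hg12 : |g (ρ₁ t) - g (ρ₂ t)| ≤ C₁*(2*rb*Real.exp (-μ*t)) * (d * Real.exp (-μ*t)) :=
      le_trans hmvt (by
        apply mul_le_mul_of_nonneg_left hρd
        positivity)
    calc Real.exp (μ*t) * |g (ρ₁ t) - g (ρ₂ t)|
        ≤ Real.exp (μ*t) * (C₁*(2*rb*Real.exp (-μ*t)) * (d * Real.exp (-μ*t))) :=
          mul_le_mul_of_nonneg_left hg12 hepos.le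
      _ = (Real.exp (μ*t) * Real.exp (-μ*t)) * (2*C₁*rb*d*Real.exp (-μ*t)) := by ring
      _ = 2*C₁*rb*d*Real.exp (-μ*t) := by rw [hee, one_mul]
  -- integrability
  have hi1 : IntervalIntegrable (fun t => Real.exp (μ*t) * g (ρ₁ t)) MeasureTheory.volume 0 τ :=
    (Continuous.mul (by fun_prop) (hgc.comp hρ₁c)).intervalIntegrable _ _
  have hi2 : IntervalIntegrable (fun t => Real.exp (μ*t) * g (ρ₂ t)) MeasureTheory.volume 0 τ :=
    (Continuous.mul (by fun_prop) (hgc.comp hρ₂c)).intervalIntegrable _ _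
  have hidiff : IntervalIntegrable
      (fun t => |Real.exp (μ*t) * g (ρ₁ t) - Real.exp (μ*t) * g (ρ₂ t)|)
      MeasureTheory.volume 0 τ :=
    (Continuous.abs (Continuous.sub (Continuous.mul (by fun_prop) (hgc.comp hρ₁c))
      (Continuous.mul (by fun_prop) (hgc.comp hρ₂c)))).intervalIntegrable _ _
  have hibnd : IntervalIntegrable (fun t => 2*C₁*rb*d*Real.exp (-μ*t))
      MeasureTheory.volume 0 τ := (by fun_prop : Continuous _).intervalIntegrable _ _
  -- the integral bound
  have hintsub : (∫ t in (0:ℝ)..τ, Real.exp (μ*t) * g (ρ₁ t))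
      - (∫ t in (0:ℝ)..τ, Real.exp (μ*t) * g (ρ₂ t))
      = ∫ t in (0:ℝ)..τ, (Real.exp (μ*t) * g (ρ₁ t) - Real.exp (μ*t) * g (ρ₂ t)) :=
    (intervalIntegral.integral_sub hi1 hi2).symm
  have habs : |∫ t in (0:ℝ)..τ, (Real.exp (μ*t) * g (ρ₁ t) - Real.exp (μ*t) * g (ρ₂ t))|
      ≤ ∫ t in (0:ℝ)..τ, 2*C₁*rb*d*Real.exp (-μ*t) := by
    calc |∫ t in (0:ℝ)..τ, (Real.exp (μ*t) * g (ρ₁ t) - Real.exp (μ*t) * g (ρ₂ t))|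
        ≤ ∫ t in (0:ℝ)..τ, |Real.exp (μ*t) * g (ρ₁ t) - Real.exp (μ*t) * g (ρ₂ t)| :=
          intervalIntegral.abs_integral_le_integral_abs hτ
      _ ≤ ∫ t in (0:ℝ)..τ, 2*C₁*rb*d*Real.exp (-μ*t) := by
          apply intervalIntegral.integral_mono_on hτ hidiff hibnd key
  have hval : (∫ t in (0:ℝ)..τ, 2*C₁*rb*d*Real.exp (-μ*t)) ≤ 2*C₁*rb*d/μ := by
    have : (∫ t in (0:ℝ)..τ, 2*C₁*rb*d*Real.exp (-μ*t))
        = 2*C₁*rb*d * ((1 - Real.exp (-μ*τ))/μ) := by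
      rw [intervalIntegral.integral_const_mul, stmt_5_exp_int μ τ hμ]
    rw [this]
    have hexp0 : 0 ≤ Real.exp (-μ*τ) := (Real.exp_pos _).le
    rw [div_eq_mul_inv, ← mul_assoc, mul_comm (2*C₁*rb*d) _]
    rw [mul_comm (1 - Real.exp (-μ*τ)) (2*C₁*rb*d)]
    have hp : 0 ≤ 2*C₁*rb*d*Real.exp (-μ*τ) := by positivity
    have h1 : 2*C₁*rb*d * (1 - Real.exp (-μ*τ)) ≤ 2*C₁*rb*d := by nlinarith
    exact mul_le_mul_of_nonneg_right h1 (by positivity)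
  -- conclude
  have hLHS : |(rb * Real.exp (-μ * τ) +
          Real.exp (-μ * τ) * ∫ t in (0:ℝ)..τ, Real.exp (μ * t) * g (ρ₁ t)) -
       (rb * Real.exp (-μ * τ) +
          Real.exp (-μ * τ) * ∫ t in (0:ℝ)..τ, Real.exp (μ * t) * g (ρ₂ t))|
      = Real.exp (-μ*τ) *
        |(∫ t in (0:ℝ)..τ, Real.exp (μ*t) * g (ρ₁ t))
          - (∫ t in (0:ℝ)..τ, Real.exp (μ*t) * g (ρ₂ t))| := by
    rw [show (rb * Real.exp (-μ * τ) +
          Real.exp (-μ * τ) * ∫ t in (0:ℝ)..τ, Real.exp (μ * t) * g (ρ₁ t)) -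
       (rb * Real.exp (-μ * τ) +
          Real.exp (-μ * τ) * ∫ t in (0:ℝ)..τ, Real.exp (μ * t) * g (ρ₂ t))
      = Real.exp (-μ*τ) * ((∫ t in (0:ℝ)..τ, Real.exp (μ*t) * g (ρ₁ t))
          - (∫ t in (0:ℝ)..τ, Real.exp (μ*t) * g (ρ₂ t))) from by ring,
      abs_mul, abs_of_pos (Real.exp_pos _)]
  rw [hLHS, hintsub]
  calc Real.exp (-μ*τ) * |∫ t in (0:ℝ)..τ,
        (Real.exp (μ*t) * g (ρ₁ t) - Real.exp (μ*t) * g (ρ₂ t))|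
      ≤ Real.exp (-μ*τ) * (2*C₁*rb*d/μ) :=
        mul_le_mul_of_nonneg_left (le_trans habs hval) (Real.exp_pos _).le
    _ = (2 * C₁ * rb / μ) * d * Real.exp (-μ * τ) := by ring
end

section
/- Let μ > 0 and let r : [0,∞) → ℝ satisfy the integral equation r(τ) = r̄ e^{-μτ} + e^{-μτ} ∫₀^τ e^{μt} g(r(t)) dt, with 0 ≤ r(τ) ≤ 2r̄ e^{-μτ} and |g(r)| ≤ C r². Set K = r̄ + ∫₀^∞ e^{μt} g(r(t)) dt (the integral is absolutely convergent). Then |r(τ) − K e^{-μτ}| ≤ (4C r̄²/μ) e^{-2μτ} for all τ ≥ 0. In particular r(τ) = K e^{-μτ} + O(e^{-2μτ}). -/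
open MeasureTheory

lemma exp_int_Ioi (μ τ : ℝ) (hμ : 0 < μ) :
    ∫ t in Set.Ioi τ, Real.exp (-μ * t) = Real.exp (-μ * τ) / μ := by
  have hd : ∀ x : ℝ, HasDerivAt (fun t => -Real.exp (-μ * t) / μ) (Real.exp (-μ * x)) x := by
    intro x
    have h1 : HasDerivAt (fun t : ℝ => -μ * t) (-μ) x := by
      simpa using (hasDerivAt_id x).const_mul (-μ)
    have := (h1.exp.neg).div_const μ
    have heq : -(Real.exp (-μ * x) * -μ) / μ = Real.exp (-μ * x) := by field_simp
    simpa only [Pi.neg_apply, neg_div, heq] using this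
  have htend : Filter.Tendsto (fun t : ℝ => -Real.exp (-μ * t) / μ) Filter.atTop (nhds 0) := by
    have : Filter.Tendsto (fun t : ℝ => Real.exp (-μ * t)) Filter.atTop (nhds 0) := by
      simpa using Real.tendsto_exp_comp_nhds_zero.2
        (Filter.Tendsto.const_mul_atTop_of_neg (neg_neg_iff_pos.2 hμ) Filter.tendsto_id)
    simpa [neg_div] using (this.div_const μ).neg
  have h := integral_Ioi_of_hasDerivAt_of_tendsto' (fun x _ => hd x)
    (exp_neg_integrableOn_Ioi τ hμ) htend
  rw [h]; ring

/-- If `r` solves the Duhamel equation with `0 ≤ r(τ) ≤ 2rbe^{-μτ}` and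
`|g| ≤ C(·)²`, then with `K = rb + ∫₀^∞ e^{μt}g(r(t))dt` (an absolutely
convergent integral) one has `|r(τ) - Ke^{-μτ}| ≤ (4Crb²/μ)e^{-2μτ}`. -/
theorem stmt_6 (μ C rb : ℝ) (hμ : 0 < μ) (hC : 0 < C) (hrb : 0 < rb)
    (g : ℝ → ℝ) (hg : Continuous g) (hgb : ∀ s : ℝ, |g s| ≤ C * s ^ 2)
    (r : ℝ → ℝ) (hr : Continuous r)
    (hbound : ∀ τ, 0 ≤ τ → 0 ≤ r τ ∧ r τ ≤ 2 * rb * Real.exp (-μ * τ))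
    (hduh : ∀ τ, 0 ≤ τ →
      r τ = rb * Real.exp (-μ * τ) +
        Real.exp (-μ * τ) * ∫ t in (0:ℝ)..τ, Real.exp (μ * t) * g (r t)) :
    IntegrableOn (fun t => Real.exp (μ * t) * g (r t)) (Set.Ioi (0:ℝ)) ∧
    ∀ τ, 0 ≤ τ →
      |r τ - (rb + ∫ t in Set.Ioi (0:ℝ), Real.exp (μ * t) * g (r t)) * Real.exp (-μ * τ)|
        ≤ (4 * C * rb ^ 2 / μ) * Real.exp (-2 * μ * τ) := by
  set f : ℝ → ℝ := fun t => Real.exp (μ * t) * g (r t) with hf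
  have hfb : ∀ t, 0 ≤ t → |f t| ≤ 4 * C * rb ^ 2 * Real.exp (-μ * t) := by
    intro t ht
    obtain ⟨h0, h1⟩ := hbound t ht
    have : |f t| = Real.exp (μ * t) * |g (r t)| := by
      rw [abs_mul, abs_of_pos (Real.exp_pos _)]
    rw [this]
    have h2 : |g (r t)| ≤ C * (2 * rb * Real.exp (-μ * t)) ^ 2 := by
      refine (hgb (r t)).trans ?_
      have := sq_le_sq' (by linarith) h1
      nlinarith [this]
    calc Real.exp (μ * t) * |g (r t)|
        ≤ Real.exp (μ * t) * (C * (2 * rb * Real.exp (-μ * t)) ^ 2) := by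
          exact mul_le_mul_of_nonneg_left h2 (Real.exp_pos _).le
      _ = 4 * C * rb ^ 2 * (Real.exp (μ * t) * Real.exp (-μ * t) * Real.exp (-μ * t)) := by
          ring
      _ = 4 * C * rb ^ 2 * Real.exp (-μ * t) := by
          rw [← Real.exp_add]; simp
  have hfc : Continuous f := (Real.continuous_exp.comp (continuous_const.mul continuous_id)).mul
    (hg.comp hr)
  have hint : ∀ τ : ℝ, IntegrableOn f (Set.Ioi τ) → True := fun _ _ => trivial
  have hintIoi : ∀ τ : ℝ, 0 ≤ τ → IntegrableOn f (Set.Ioi τ) := by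
    intro τ hτ
    refine Integrable.mono' (((exp_neg_integrableOn_Ioi τ hμ).const_mul
      (4 * C * rb ^ 2))) (hfc.aestronglyMeasurable.restrict) ?_
    filter_upwards [ae_restrict_mem measurableSet_Ioi] with t ht
    exact hfb t (hτ.trans ht.le)
  have hI0 := hintIoi 0 le_rfl
  refine ⟨hI0, fun τ hτ => ?_⟩
  -- split the integral
  have hsplit : (∫ t in Set.Ioi (0:ℝ), f t)
      = (∫ t in Set.Ioc (0:ℝ) τ, f t) + ∫ t in Set.Ioi τ, f t := by
    rw [← setIntegral_union (Set.Ioc_disjoint_Ioi le_rfl) measurableSet_Ioi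
      (hI0.mono_set Set.Ioc_subset_Ioi_self) (hintIoi τ hτ),
      Set.Ioc_union_Ioi_eq_Ioi hτ]
  have hiv : (∫ t in (0:ℝ)..τ, f t) = ∫ t in Set.Ioc (0:ℝ) τ, f t :=
    intervalIntegral.integral_of_le hτ
  have key : r τ - (rb + ∫ t in Set.Ioi (0:ℝ), f t) * Real.exp (-μ * τ)
      = -(Real.exp (-μ * τ) * ∫ t in Set.Ioi τ, f t) := by
    rw [hduh τ hτ, hiv, hsplit]; ring
  rw [key, abs_neg, abs_mul, abs_of_pos (Real.exp_pos _)]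
  have htail : |∫ t in Set.Ioi τ, f t| ≤ (4 * C * rb ^ 2 / μ) * Real.exp (-μ * τ) := by
    calc |∫ t in Set.Ioi τ, f t| ≤ ∫ t in Set.Ioi τ, 4 * C * rb ^ 2 * Real.exp (-μ * t) := by
          rw [← Real.norm_eq_abs]
          refine (norm_integral_le_integral_norm _).trans ?_
          simp only [Real.norm_eq_abs]
          refine setIntegral_mono_on ((hintIoi τ hτ).abs) ((exp_neg_integrableOn_Ioi τ hμ).const_mul _)
            measurableSet_Ioi ?_
          intro t ht; exact hfb t (hτ.trans ht.le)
      _ = 4 * C * rb ^ 2 * (Real.exp (-μ * τ) / μ) := by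
          rw [integral_const_mul, exp_int_Ioi μ τ hμ]
      _ = (4 * C * rb ^ 2 / μ) * Real.exp (-μ * τ) := by ring
  calc Real.exp (-μ * τ) * |∫ t in Set.Ioi τ, f t|
      ≤ Real.exp (-μ * τ) * ((4 * C * rb ^ 2 / μ) * Real.exp (-μ * τ)) :=
        mul_le_mul_of_nonneg_left htail (Real.exp_pos _).le
    _ = (4 * C * rb ^ 2 / μ) * Real.exp (-2 * μ * τ) := by
        rw [show (-2 : ℝ) * μ * τ = (-μ * τ) + (-μ * τ) by ring, Real.exp_add]; ring
end

section
/- Let μ₁, ..., μ_N > 0, k₁, ..., k_N > 0, and ς ∈ {−1, 1}. For ξ ∈ ℝ^N with ξ₀ := ξ_N − 1, set E_j(ξ) = exp(−(μ_j/ε)(ξ_j − ξ_{j−1})) (indices mod N, with E_{N+1} = E₁, k_{N+1} = k₁, μ_{N+1} = μ₁) and C_j⁰(ξ) = (2ε/ q_j²)(ς k_{j+1} E_{j+1}(ξ) − ς k_j E_j(ξ)) where q_j > 0. Define J⁰(ξ) = ε Σ_j q_j² − 2ε² Σ_h (ς k_h / μ_h) E_h(ξ). Then for every ξ and every direction ξ'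 ∈ ℝ^N, Σ_h C_h⁰(ξ) q_h² ξ'_h = − Σ_h (∂J⁰/∂ξ_h)(ξ) ξ'_h. That is, (C₁⁰, ..., C_N⁰) is the negative gradient of J⁰ with respect to the inner product (ξ, ξ') = Σ_h q_h² ξ_h ξ'_h. -/
/-- The reduced layer dynamics `(C₁⁰,...,C_N⁰)` is the negative gradient of
`J⁰(ξ) = εΣ q_j² − 2ε²Σ (ςk_h/μ_h)E_h(ξ)` with respect to the inner product
`(ξ,ξ') = Σ q_h² ξ_h ξ'_h`. -/
theorem stmt_9 (N : ℕ) [NeZero N] (hN : 2 ≤ N) (ε : ℝ) (hε : 0 < ε)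
    (μ k q : Fin N → ℝ) (hμ : ∀ j, 0 < μ j) (hk : ∀ j, 0 < k j)
    (hq : ∀ j, 0 < q j) (ς : ℝ) (hς : ς = 1 ∨ ς = -1)
    (ξ ξ' : Fin N → ℝ)
    (E : (Fin N → ℝ) → Fin N → ℝ)
    (hE : ∀ x j, E x j =
      Real.exp (-(μ j / ε) * (x j - x (j - 1) + if j = 0 then 1 else 0)))
    (J0 : (Fin N → ℝ) → ℝ)
    (hJ0 : ∀ x, J0 x = ε * ∑ j, (q j) ^ 2 - 2 * ε ^ 2 * ∑ h, (ς * k h / μ h) * E x h)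
    (C0 : Fin N → ℝ)
    (hC0 : ∀ j, C0 j = (2 * ε / (q j) ^ 2) *
      (ς * k (j + 1) * E ξ (j + 1) - ς * k j * E ξ j)) :
    ∑ h, C0 h * (q h) ^ 2 * ξ' h = -(fderiv ℝ J0 ξ ξ') := by
  classical
  set c : Fin N → ℝ := fun j => if j = 0 then 1 else 0 with hc
  set a : Fin N → ℝ := fun h => -(μ h / ε) with ha
  -- derivative of each exponential term
  set L : Fin N → ((Fin N → ℝ) →L[ℝ] ℝ) := fun h =>
    a h • ((ContinuousLinearMap.proj h : (Fin N → ℝ) →L[ℝ] ℝ) -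
      ContinuousLinearMap.proj (h - 1)) with hL
  have hterm : ∀ h : Fin N, HasFDerivAt
      (fun x : Fin N → ℝ => (ς * k h / μ h) *
        Real.exp (a h * (x h - x (h - 1) + c h)))
      ((ς * k h / μ h) • (Real.exp (a h * (ξ h - ξ (h - 1) + c h)) • L h)) ξ := by
    intro h
    have h1 : HasFDerivAt (fun x : Fin N → ℝ => a h * (x h - x (h - 1) + c h))
        (L h) ξ := by
      have hfun : (fun x : Fin N → ℝ => a h * (x h - x (h - 1) + c h)) =
          fun x => L h x + a h * c h := by
        funext x
        simp [hL, ContinuousLinearMap.proj_apply, smul_eq_mul]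
        ring
      rw [hfun]
      exact ((L h).hasFDerivAt).add_const _
    have h2 := h1.exp
    have h3 := h2.const_mul (ς * k h / μ h)
    exact h3
  have hS : HasFDerivAt
      (fun x : Fin N → ℝ => ∑ h, (ς * k h / μ h) *
        Real.exp (a h * (x h - x (h - 1) + c h)))
      (∑ h, (ς * k h / μ h) • (Real.exp (a h * (ξ h - ξ (h - 1) + c h)) • L h)) ξ :=
    HasFDerivAt.fun_sum fun h _ => hterm h
  have hJfun : J0 = fun x => ε * ∑ j, (q j) ^ 2 -
      2 * ε ^ 2 * ∑ h, (ς * k h / μ h) *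
        Real.exp (a h * (x h - x (h - 1) + c h)) := by
    funext x
    rw [hJ0]
    congr 1
    congr 1
    apply Finset.sum_congr rfl
    intro h _
    rw [hE]
  have hJd : HasFDerivAt J0
      (-((2 * ε ^ 2) • ∑ h, (ς * k h / μ h) •
        (Real.exp (a h * (ξ h - ξ (h - 1) + c h)) • L h))) ξ := by
    rw [hJfun]
    exact (hS.const_mul (2 * ε ^ 2)).const_sub _
  rw [hJd.fderiv]
  -- compute the application to ξ'
  have happ : (-((2 * ε ^ 2) • ∑ h, (ς * k h / μ h) •
        (Real.exp (a h * (ξ h - ξ (h - 1) + c h)) • L h))) ξ' =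
      -(2 * ε ^ 2 * ∑ h, (ς * k h / μ h) *
        (Real.exp (a h * (ξ h - ξ (h - 1) + c h)) *
          (a h * (ξ' h - ξ' (h - 1))))) := by
    simp [hL, ContinuousLinearMap.proj_apply, Finset.mul_sum, smul_eq_mul,
      ContinuousLinearMap.sum_apply, mul_assoc]
  rw [happ, neg_neg]
  -- now pure algebra
  have hEeq : ∀ h : Fin N, E ξ h = Real.exp (a h * (ξ h - ξ (h - 1) + c h)) := by
    intro h; rw [hE]
  -- RHS = ∑ 2ε ς k_h E_h (ξ'_{h-1} - ξ'_h)
  have hRHS : 2 * ε ^ 2 * ∑ h, (ς * k h / μ h) *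
      (Real.exp (a h * (ξ h - ξ (h - 1) + c h)) * (a h * (ξ' h - ξ' (h - 1)))) =
      ∑ h, 2 * ε * ς * k h * E ξ h * (ξ' (h - 1) - ξ' h) := by
    rw [Finset.mul_sum]
    apply Finset.sum_congr rfl
    intro h _
    rw [hEeq h, ha]
    have hμh := (hμ h).ne'
    field_simp
    ring
  rw [hRHS]
  -- LHS
  have hLHS : ∀ h : Fin N, C0 h * (q h) ^ 2 * ξ' h =
      2 * ε * ς * k (h + 1) * E ξ (h + 1) * ξ' h - 2 * ε * ς * k h * E ξ h * ξ' h := by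
    intro h
    rw [hC0]
    have hqh := (hq h).ne'
    field_simp
  calc ∑ h, C0 h * (q h) ^ 2 * ξ' h
      = ∑ h : Fin N, (2 * ε * ς * k (h + 1) * E ξ (h + 1) * ξ' h -
          2 * ε * ς * k h * E ξ h * ξ' h) := Finset.sum_congr rfl fun h _ => hLHS h
    _ = (∑ h : Fin N, 2 * ε * ς * k (h + 1) * E ξ (h + 1) * ξ' h) -
        ∑ h : Fin N, 2 * ε * ς * k h * E ξ h * ξ' h := Finset.sum_sub_distrib _ _
    _ = (∑ h : Fin N, 2 * ε * ς * k h * E ξ h * ξ' (h - 1)) -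
        ∑ h : Fin N, 2 * ε * ς * k h * E ξ h * ξ' h := by
        congr 1
        apply Fintype.sum_equiv (Equiv.addRight (1 : Fin N))
        intro h
        simp [Equiv.coe_addRight, add_sub_cancel_right]
    _ = ∑ h, 2 * ε * ς * k h * E ξ h * (ξ' (h - 1) - ξ' h) := by
        rw [← Finset.sum_sub_distrib]
        apply Finset.sum_congr rfl
        intro h _
        ring
end

section
/- Let H be a real inner product space, v₁, ..., v_N unit vectors and w₁, ..., w_N vectors in H such that v_j + w_j are linearly independent. Suppose ‖w_j‖ ≤ η and |⟨v_i, v_j⟩| ≤ η for i ≠ j, with η small. Apply Gram–Schmidt to v₁+w₁, ..., v_N+w_N to obtain an orthonormal family φ₁, ..., φ_N. Then there exist constants C_n depending only on n such that, writing φ_n = v_n + ŵ_n, one has ‖ŵ_n‖ ≤ C_n η for all n = 1, ..., N, provided η ≤ η₀(N) for some η₀(N) > 0. -/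
noncomputable def gsE : ℕ → ℝ
  | 0 => 1
  | n + 1 => 5 * gsE n + 1

lemma gsE_pos : ∀ n, (0:ℝ) < gsE n
  | 0 => one_pos
  | n + 1 => by have := gsE_pos n; simp [gsE]; linarith

lemma one_le_gsE : ∀ n, (1:ℝ) ≤ gsE n
  | 0 => le_refl _
  | n + 1 => by have := gsE_pos n; simp [gsE]; linarith

lemma gsE_mono : Monotone gsE := by
  apply monotone_nat_of_le_succ
  intro n
  have := gsE_pos n
  simp [gsE]; linarith

lemma sum_gsE (m : ℕ) : ∑ i ∈ Finset.range m, (1 + 4 * gsE i) = gsE m - 1 := by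
  induction m with
  | zero => simp [gsE]
  | succ m ih => rw [Finset.sum_range_succ, ih]; simp [gsE]; ring


/-- The normalized Gram–Schmidt process on a family indexed by `Fin N`. -/
noncomputable def finGramSchmidtNormed (N : ℕ) {H : Type}
    [NormedAddCommGroup H] [InnerProductSpace ℝ H] (f : Fin N → H) : Fin N → H :=
  @InnerProductSpace.gramSchmidtNormed ℝ H _ _ _ (Fin N) _ _ (inferInstanceAs (WellFoundedLT (Fin N))) f

/-- Stability of Gram–Schmidt under small perturbations: if `v_j` are unit
vectors with pairwise inner products `≤ η` and `‖w_j‖ ≤ η`, and the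
perturbations are orthogonal to the previously constructed vectors, then the
orthonormal family `φ_n` obtained from `v_n + w_n` satisfies
`‖φ_n - v_n‖ ≤ C_n η` for constants depending only on `n`, provided `η ≤ η₀(N)`. -/
theorem stmt_11 (N : ℕ) :
    ∃ η₀ : ℝ, 0 < η₀ ∧ ∃ C : Fin N → ℝ,
      ∀ (H : Type) [NormedAddCommGroup H] [InnerProductSpace ℝ H]
        (v w : Fin N → H) (η : ℝ), 0 ≤ η → η ≤ η₀ →
        (∀ j, ‖v j‖ = 1) →
        (∀ i j, i ≠ j → |(inner ℝ (v i) (v j) : ℝ)| ≤ η) →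
        (∀ j, ‖w j‖ ≤ η) →
        LinearIndependent ℝ (fun j => v j + w j) →
        (∀ j k : Fin N, k < j →
          (inner ℝ (w j) (finGramSchmidtNormed N (fun i => v i + w i) k) : ℝ) = 0) →
        ∀ n : Fin N, ‖finGramSchmidtNormed N (fun i => v i + w i) n - v n‖ ≤ C n * η := by
  have hEN : (0:ℝ) < gsE N := gsE_pos N
  refine ⟨1 / (4 * gsE N), by positivity, fun n => 4 * gsE n.val, ?_⟩
  intro H _ _ v w η hη0 hηη₀ hv hvv hw hli horth
  set f : Fin N → H := fun i => v i + w i with hf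
  have hWF : WellFoundedLT (Fin N) := inferInstanceAs (WellFoundedLT (Fin N))
  set φ : Fin N → H := finGramSchmidtNormed N f with hφ
  have hφdef : φ = @InnerProductSpace.gramSchmidtNormed ℝ H _ _ _ (Fin N) _ _ hWF f := rfl
  set g : Fin N → H := @InnerProductSpace.gramSchmidt ℝ H _ _ _ (Fin N) _ _ hWF f with hg
  have hgne : ∀ n, g n ≠ 0 := fun n => InnerProductSpace.gramSchmidt_ne_zero n hli
  have hφnorm : ∀ n, ‖φ n‖ = 1 := fun n => by
    rw [hφdef]; exact InnerProductSpace.gramSchmidtNormed_unit_length n hli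
  -- strong induction on n.val
  have key : ∀ m : ℕ, ∀ n : Fin N, n.val = m → ‖φ n - v n‖ ≤ 4 * gsE n.val * η := by
    intro m
    induction m using Nat.strong_induction_on with
    | _ m ih =>
    intro n hnm
    have ihn : ∀ i : Fin N, i < n → ‖φ i - v i‖ ≤ 4 * gsE i.val * η := by
      intro i hi
      exact ih i.val (hnm ▸ hi) i rfl
    -- the Gram–Schmidt decomposition
    have hdec : g n = f n - ∑ i ∈ Finset.Iio n, (inner ℝ (φ i) (f n) : ℝ) • φ i := by
      rw [hg, InnerProductSpace.gramSchmidt_def ℝ f n]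
      congr 1
      apply Finset.sum_congr rfl
      intro i _
      rw [Submodule.starProjection_singleton]
      have hne : ‖g i‖ ≠ 0 := norm_ne_zero_iff.2 (hgne i)
      have hphi : φ i = (‖g i‖:ℝ)⁻¹ • g i := rfl
      rw [hphi, real_inner_smul_left, smul_smul]
      congr 1
      simp only [RCLike.ofReal_real_eq_id, id_eq]
      rw [pow_two]
      rw [div_eq_mul_inv, mul_inv]
      ring
    -- inner product bounds
    have hcoef : ∀ i : Fin N, i < n → |(inner ℝ (φ i) (f n) : ℝ)| ≤ (1 + 4 * gsE i.val) * η := by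
      intro i hi
      have hwo : (inner ℝ (w n) (φ i) : ℝ) = 0 := horth n i hi
      have hwo' : (inner ℝ (φ i) (w n) : ℝ) = 0 := by rw [real_inner_comm]; exact hwo
      have : (inner ℝ (φ i) (f n) : ℝ) = inner ℝ (v i) (v n) + inner ℝ (φ i - v i) (v n) := by
        have hfn : f n = v n + w n := rfl
        rw [hfn]
        simp only [inner_add_right, inner_sub_left, hwo']
        ring
      rw [this]
      calc |(inner ℝ (v i) (v n) : ℝ) + inner ℝ (φ i - v i) (v n)|
          ≤ |(inner ℝ (v i) (v n) : ℝ)| + |(inner ℝ (φ i - v i) (v n) : ℝ)| := abs_add_le _ _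
        _ ≤ η + ‖φ i - v i‖ * ‖v n‖ := by
            gcongr
            · exact hvv i n (ne_of_lt hi)
            · exact abs_real_inner_le_norm _ _
        _ ≤ η + (4 * gsE i.val * η) * 1 := by
            rw [hv n, mul_one, mul_one]
            have := ihn i hi
            linarith
        _ = (1 + 4 * gsE i.val) * η := by ring
    -- norm bound on g n - v n
    have hsum : ∑ i ∈ Finset.Iio n, (1 + 4 * gsE i.val) = gsE n.val - 1 := by
      rw [← sum_gsE n.val, ← Nat.Iio_eq_range, ← Fin.map_valEmbedding_Iio, Finset.sum_map]
      rfl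
    have hgv : ‖g n - v n‖ ≤ gsE n.val * η := by
      have : g n - v n = w n - ∑ i ∈ Finset.Iio n, (inner ℝ (φ i) (f n) : ℝ) • φ i := by
        rw [hdec]; simp only [hf]; abel
      rw [this]
      calc ‖w n - ∑ i ∈ Finset.Iio n, (inner ℝ (φ i) (f n) : ℝ) • φ i‖
          ≤ ‖w n‖ + ‖∑ i ∈ Finset.Iio n, (inner ℝ (φ i) (f n) : ℝ) • φ i‖ := norm_sub_le _ _
        _ ≤ η + ∑ i ∈ Finset.Iio n, (1 + 4 * gsE i.val) * η := by
            gcongr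
            · exact hw n
            · refine le_trans (norm_sum_le _ _) (Finset.sum_le_sum fun i hi => ?_)
              rw [norm_smul, hφnorm i, mul_one]
              exact hcoef i (Finset.mem_Iio.mp hi)
        _ = η + (gsE n.val - 1) * η := by rw [← Finset.sum_mul, hsum]
        _ = gsE n.val * η := by ring
    -- lower bound on ‖g n‖
    have hEn : gsE n.val ≤ gsE N := gsE_mono (le_of_lt n.isLt)
    have hquarter : gsE n.val * η ≤ 1 / 4 := by
      have h1 : gsE n.val * η ≤ gsE N * η := by
        gcongr
      have h2 : gsE N * η ≤ gsE N * (1 / (4 * gsE N)) := by gcongr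
      have h3 : gsE N * (1 / (4 * gsE N)) = 1 / 4 := by field_simp
      linarith
    have hgnorm : (3:ℝ)/4 ≤ ‖g n‖ := by
      have h1 : ‖v n‖ - ‖g n - v n‖ ≤ ‖g n‖ := by
        have := norm_sub_norm_le (g n - v n + v n) (v n)
        simp at this
        have h := norm_sub_le (g n) (g n - v n)
        simp at h
        linarith [norm_sub_le (g n - v n) (-(v n))]
      rw [hv n] at h1
      linarith
    -- final bound
    have hgpos : (0:ℝ) < ‖g n‖ := by linarith
    have hne : ‖g n‖ ≠ 0 := ne_of_gt hgpos
    have hφn : φ n = (‖g n‖:ℝ)⁻¹ • g n := rfl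
    have hdiff : φ n - v n = (‖g n‖:ℝ)⁻¹ • (g n - ‖g n‖ • v n) := by
      rw [hφn, smul_sub, smul_smul, inv_mul_cancel₀ hne, one_smul]
    have h1 : ‖g n - ‖g n‖ • v n‖ ≤ 2 * (gsE n.val * η) := by
      have e1 : g n - ‖g n‖ • v n = (g n - v n) + (1 - ‖g n‖) • v n := by
        rw [sub_smul, one_smul]; abel
      rw [e1]
      have e2 : ‖(1 - ‖g n‖) • v n‖ = |1 - ‖g n‖| := by
        rw [norm_smul, hv n, mul_one, Real.norm_eq_abs]
      have e3 : |1 - ‖g n‖| ≤ ‖g n - v n‖ := by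
        have := abs_norm_sub_norm_le (g n) (v n)
        rw [hv n] at this
        rw [abs_sub_comm]
        exact this
      calc ‖(g n - v n) + (1 - ‖g n‖) • v n‖ ≤ ‖g n - v n‖ + ‖(1 - ‖g n‖) • v n‖ :=
            norm_add_le _ _
        _ ≤ ‖g n - v n‖ + ‖g n - v n‖ := by rw [e2]; linarith
        _ ≤ 2 * (gsE n.val * η) := by linarith
    rw [hdiff, norm_smul, norm_inv, norm_norm]
    have hinv : ‖g n‖⁻¹ ≤ ((3:ℝ)/4)⁻¹ := by
      apply inv_anti₀ (by norm_num) hgnorm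
    have h2nn : (0:ℝ) ≤ 2 * (gsE n.val * η) :=
      mul_nonneg (by norm_num) (mul_nonneg (le_of_lt (gsE_pos n.val)) hη0)
    calc ‖g n‖⁻¹ * ‖g n - ‖g n‖ • v n‖ ≤ ((3:ℝ)/4)⁻¹ * (2 * (gsE n.val * η)) := by
          apply mul_le_mul hinv h1 (norm_nonneg _) (by norm_num)
        _ ≤ 4 * gsE n.val * η := by
          rw [show ((3:ℝ)/4)⁻¹ = 4/3 by norm_num]
          nlinarith [mul_nonneg (le_of_lt (gsE_pos n.val)) hη0]
  intro n
  exact key n.val n rfl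
end

section
/- Let k₁, ..., k_N > 0 with the convention k_{N+1} = k₁, and let ς₁, ..., ς_N ∈ {−1, +1} with ς_{N+1} = ς₁. Let E₁, ..., E_N > 0 (with E_{N+1} = E₁) satisfy the equations ς_{j+1} k_{j+1} E_{j+1} = ς_j k_j E_j + r_j for j = 1, ..., N, where the errors satisfy |r_j| ≤ θ max_h E_h with 0 ≤ θ < (min_h k_h) / (2N). Then all ς_j are equal. (Necessity of the sign condition for solvability of the bifurcation equation.) -/
open Fin.NatCast in
/-- Necessity of the sign condition: if positive quantities `E_j` solve the
cyclic bifurcation equations `ς_{j+1}k_{j+1}E_{j+1} = ς_j k_j E_j + r_j` with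
errors small relative to `max_h E_h`, then all signs `ς_j` agree. -/
theorem stmt_17 (N : ℕ) [NeZero N] (k E r ς : Fin N → ℝ)
    (hk : ∀ j, 0 < k j) (hE : ∀ j, 0 < E j)
    (hsign : ∀ j, ς j = 1 ∨ ς j = -1)
    (Emax kmin : ℝ)
    (hEmax : IsGreatest (Set.range E) Emax)
    (hkmin : ∀ h, kmin ≤ k h) (hkminpos : 0 < kmin)
    (θ : ℝ) (hθ0 : 0 ≤ θ) (hθ : θ < kmin / (2 * N))
    (hr : ∀ j, |r j| ≤ θ * Emax)
    (heq : ∀ j : Fin N, ς (j + 1) * k (j + 1) * E (j + 1) = ς j * k j * E j + r j) :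
    ∀ i j : Fin N, ς i = ς j := by
  obtain ⟨⟨j0, hj0⟩, hub⟩ := hEmax
  replace hub : ∀ h, E h ≤ Emax := fun h => hub ⟨h, rfl⟩
  have hEmaxpos : 0 < Emax := lt_of_lt_of_le (hE j0) (hub j0)
  have hN : 0 < (N : ℝ) := by
    have := Nat.pos_of_ne_zero (NeZero.ne N)
    exact_mod_cast this
  have h2N : 2 * (N : ℝ) * θ < kmin := by
    rw [lt_div_iff₀ (by positivity)] at hθ; linarith
  -- key step: if k j * E j > θ * Emax then sign propagates and size bound
  have step : ∀ j : Fin N, θ * Emax < k j * E j →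
      ς (j + 1) = ς j ∧ k j * E j - θ * Emax ≤ k (j + 1) * E (j + 1) := by
    intro j hbig
    have hpos1 : 0 < k (j + 1) * E (j + 1) := mul_pos (hk _) (hE _)
    have hpos0 : 0 < k j * E j := mul_pos (hk _) (hE _)
    obtain ⟨hr1, hr2⟩ := abs_le.mp (hr j)
    have he := heq j
    rcases hsign j with h1 | h1 <;> rcases hsign (j + 1) with h2 | h2 <;>
      rw [h1, h2] at he ⊢ <;>
      first
        | exact ⟨rfl, by nlinarith⟩
        | (exfalso; nlinarith)
  have main : ∀ m : ℕ, m ≤ N →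
      ς (j0 + (m : Fin N)) = ς j0 ∧
      kmin * Emax - m * (θ * Emax) ≤ k (j0 + (m : Fin N)) * E (j0 + (m : Fin N)) := by
    intro m
    induction m with
    | zero =>
      intro _
      simp only [Nat.cast_zero, add_zero, Nat.cast_ofNat]
      constructor
      · norm_num
      · rw [← hj0]
        nlinarith [mul_le_mul_of_nonneg_right (hkmin j0) (hE j0).le]
    | succ m ih =>
      intro hm
      obtain ⟨ihs, ihb⟩ := ih (le_of_lt (Nat.lt_of_succ_le hm))
      have hmN : (m : ℝ) ≤ (N : ℝ) - 1 := by
        have : (m : ℝ) + 1 ≤ N := by exact_mod_cast hm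
        linarith
      have hmθ : ((m : ℝ) + 1) * θ < kmin := by nlinarith
      have hbig : θ * Emax < k (j0 + (m : Fin N)) * E (j0 + (m : Fin N)) := by
        nlinarith [mul_lt_mul_of_pos_right hmθ hEmaxpos]
      obtain ⟨hs, hb⟩ := step _ hbig
      have hcast : ((m + 1 : ℕ) : Fin N) = (m : Fin N) + 1 := by push_cast; ring
      rw [hcast, ← add_assoc]
      refine ⟨hs.trans ihs, ?_⟩
      push_cast
      linarith
  intro i j
  have key : ∀ i : Fin N, ς i = ς j0 := by
    intro i
    have h1 := (main (i - j0).val (le_of_lt (i - j0).isLt)).1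
    rwa [Fin.cast_val_eq_self, add_sub_cancel] at h1
  rw [key i, key j]
end
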